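/- Let G be an α_i-metric graph and k a positive integer. Every vertex v with e(v) ≤ rad(G)+k satisfies d(v, C(G)) ≤ k+i. Consequently, for every vertex v, d(v,C(G)) + rad(G) ≥ e(v) ≥ d(v,C(G)) + rad(G) - i. -/

import Mathlib

/-!
Fix a vertex `v` with `e(v) ≤ r + k` and a vertex `c` with `e(c) ≤ r` as close to `v` as
possible. If `d(v, c) > k + i`, let `c'` be the neighbour of `c` on a shortest `(c, v)`-path.
A vertex `x` with `d(c', x) > r` has `d(c', x) = r + 1 = d(c, x) + 1`, so `c ∈ I(x, c')` and
`c' ∈ I(c, v)`, and the `α_i` condition gives `r + d(c, v) ≤ d(x, v) + i ≤ r + k + i`, which is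
impossible. Hence `e(c') ≤ r` with `c'` closer to `v`, a contradiction.
-/

open SimpleGraph

variable {V : Type*}

/-- `Itv G u v x` means `x` lies on a shortest `(u,v)`-path, i.e. `x ∈ I(u,v)`. -/
def Itv (G : SimpleGraph V) (u v x : V) : Prop :=
  G.dist u x + G.dist x v = G.dist u v

/-- `G` is an `α_i`-metric graph. -/
def AlphaI (G : SimpleGraph V) (i : ℕ) : Prop :=
  ∀ u v w x : V, Itv G u w v → Itv G v x w → G.Adj v w →
    G.dist u v + G.dist v x ≤ G.dist u x + i

/-- Eccentricity of a vertex. -/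
noncomputable def ecc (G : SimpleGraph V) [Fintype V] (v : V) : ℕ :=
  Finset.univ.sup (fun u => G.dist v u)

/-- Radius of the graph. -/
noncomputable def grad (G : SimpleGraph V) [Fintype V] [Nonempty V] : ℕ :=
  Finset.univ.inf' Finset.univ_nonempty (fun v => ecc G v)

/-- Diameter of the graph. -/
noncomputable def gdiam (G : SimpleGraph V) [Fintype V] : ℕ :=
  Finset.univ.sup (fun v => ecc G v)

variable {G : SimpleGraph V}

lemma SimpleGraph.Connected.exists_adj_dist_add_one_eq (hG : G.Connected) {u v : V}
    (huv : u ≠ v) : ∃ w, G.Adj v w ∧ G.dist u w + 1 = G.dist u v := by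
  obtain ⟨p, hp⟩ := hG.exists_walk_length_eq_dist v u
  have hnil : ¬p.Nil := Walk.not_nil_of_ne huv.symm
  refine ⟨p.snd, p.adj_snd hnil, le_antisymm ?_ ?_⟩
  · have hsnd : G.dist p.snd u ≤ p.tail.length := dist_le p.tail
    rw [dist_comm (u := u), dist_comm (u := u), ← hp, ← p.length_tail_add_one hnil]
    omega
  · calc G.dist u v ≤ G.dist u p.snd + G.dist p.snd v := hG.dist_triangle
      _ = G.dist u p.snd + 1 := by rw [dist_eq_one_iff_adj.mpr (p.adj_snd hnil).symm]

lemma AlphaI.add_dist_le_of_adj {i : ℕ} (hα : AlphaI G i) {u v w x : V} (hvw : G.Adj v w)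
    (huw : G.dist u w = G.dist u v + 1) (hvx : G.dist v x = G.dist w x + 1) :
    G.dist u v + G.dist v x ≤ G.dist u x + i := by
  have hvw₁ : G.dist v w = 1 := dist_eq_one_iff_adj.mpr hvw
  exact hα u v w x (by unfold Itv; omega) (by unfold Itv; omega) hvw

section Eccentricity

variable [Fintype V]

lemma dist_le_ecc (v u : V) : G.dist v u ≤ ecc G v :=
  Finset.le_sup (f := fun u => G.dist v u) (Finset.mem_univ u)

lemma grad_le_ecc [Nonempty V] (v : V) : grad G ≤ ecc G v :=
  Finset.inf'_le _ (Finset.mem_univ v)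

lemma exists_ecc_eq_grad [Nonempty V] : ∃ c, ecc G c = grad G := by
  obtain ⟨c, -, hc⟩ := Finset.exists_mem_eq_inf' Finset.univ_nonempty (fun v => ecc G v)
  exact ⟨c, hc.symm⟩

lemma SimpleGraph.Connected.ecc_le_dist_add_ecc (hG : G.Connected) (v c : V) :
    ecc G v ≤ G.dist v c + ecc G c :=
  Finset.sup_le fun x _ =>
    calc G.dist v x ≤ G.dist v c + G.dist c x := hG.dist_triangle
      _ ≤ G.dist v c + ecc G c := Nat.add_le_add_left (dist_le_ecc c x) _

lemma AlphaI.ecc_le_of_adj {i r k : ℕ} (hG : G.Connected) (hα : AlphaI G i) {v c c' : V}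
    (hv : ecc G v ≤ r + k) (hc : ecc G c ≤ r) (hcc' : G.Adj c c')
    (hc'v : G.dist v c' + 1 = G.dist v c) (hfar : k + i < G.dist v c) :
    ecc G c' ≤ r := by
  refine Finset.sup_le fun x _ => ?_
  by_contra! hx
  have hcx : G.dist c x ≤ r := (dist_le_ecc c x).trans hc
  have hc'x : G.dist c' x ≤ G.dist c' c + G.dist c x := hG.dist_triangle
  rw [dist_eq_one_iff_adj.mpr hcc'.symm] at hc'x
  have hα' := hα.add_dist_le_of_adj hcc' (u := x) (x := v)
    (by rw [dist_comm (u := x), dist_comm (u := x)]; omega)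
    (by rw [dist_comm (u := c), dist_comm (u := c')]; omega)
  have hvx : G.dist x v ≤ r + k := dist_comm (u := x) ▸ (dist_le_ecc v x).trans hv
  rw [dist_comm (u := x) (v := c), dist_comm (u := c) (v := v)] at hα'
  omega

lemma AlphaI.exists_ecc_le_dist_le {i r k : ℕ} (hG : G.Connected) (hα : AlphaI G i) {v : V}
    (hv : ecc G v ≤ r + k) (hr : ∃ c, ecc G c ≤ r) :
    ∃ c, ecc G c ≤ r ∧ G.dist v c ≤ k + i := by
  classical
  obtain ⟨c, hc, hmin⟩ := Finset.exists_min_image (Finset.univ.filter (ecc G · ≤ r))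
    (G.dist v) (by simpa [Finset.filter_nonempty_iff] using hr)
  rw [Finset.mem_filter] at hc
  refine ⟨c, hc.2, not_lt.mp fun hfar => ?_⟩
  obtain ⟨c', hcc', hc'v⟩ :=
    hG.exists_adj_dist_add_one_eq (u := v) (v := c) (by rintro rfl; simp at hfar)
  have hc' := hα.ecc_le_of_adj hG hv hc.2 hcc' hc'v hfar
  have := hmin c' (by simp [hc'])
  omega

end Eccentricity

theorem stmt_10 [Fintype V] [Nonempty V] (G : SimpleGraph V) (hG : G.Connected) (i : ℕ)
    (hα : AlphaI G i) :
    (∀ k : ℕ, 0 < k → ∀ v : V, ecc G v ≤ grad G + k →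
      ∃ c : V, ecc G c = grad G ∧ G.dist v c ≤ k + i) ∧
    (∀ v : V,
      (∀ c : V, ecc G c = grad G → ecc G v ≤ G.dist v c + grad G) ∧
      (∃ c : V, ecc G c = grad G ∧ G.dist v c + grad G ≤ ecc G v + i)) := by
  have hcentral : ∀ k v, ecc G v ≤ grad G + k →
      ∃ c, ecc G c = grad G ∧ G.dist v c ≤ k + i := by
    intro k v hv
    obtain ⟨c, hc, hvc⟩ := hα.exists_ecc_le_dist_le hG hv
      (exists_ecc_eq_grad.imp fun _ => le_of_eq)
    exact ⟨c, le_antisymm hc (grad_le_ecc c), hvc⟩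
  refine ⟨fun k _ => hcentral k, fun v => ⟨fun c hc => hc ▸ hG.ecc_le_dist_add_ecc v c, ?_⟩⟩
  obtain ⟨c, hc, hvc⟩ := hcentral (ecc G v - grad G) v (by omega)
  exact ⟨c, hc, by have := grad_le_ecc (G := G) v; omega⟩
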